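/- Let N = (L_1, M_1), …, (L_r, M_r) (r ≥ 1) be a special convenient integral Newton-polygon datum satisfying conditions (R1)–(R3). Set β_0 := 1 + ht(N) and β_k := L^{(k−1)}_1/M^{(k−1)}_1 for k = 1, …, r, let n_k := gcd(β_0, …, β_{k−1})/gcd(β_0, …, β_k), and define β̄_0 := β_0, β̄_1 := β_1, and β̄_{k+1} := n_k·β̄_k + β_{k+1} − β_k for 1 ≤ k ≤ r−1 (Zariski's formula for the minimal semigroup generators attached to a Puiseux characteristic). Then the Merle datum of (β̄_0, …, β̄_r), namely the sequence ((n_k − 1)·β̄_k, n_1⋯n_{k−1}·(n_k − 1)) for k = 1, …, r, is equal to N. -/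

import Mathlib

/-- A canonical Newton-polygon datum with `r` edges: a pair of `1`-indexed sequences
`(L, M)` of positive rationals with strictly increasing inclinations `L k / M k`. -/
def IsCanonicalNP (p : (ℕ → ℚ) × (ℕ → ℚ)) (r : ℕ) : Prop :=
  (∀ k, 1 ≤ k → k ≤ r → 0 < p.1 k ∧ 0 < p.2 k) ∧
  ∀ k, 1 ≤ k → k < r → p.1 k / p.2 k < p.1 (k + 1) / p.2 (k + 1)

/-- An integral datum: all the entries are positive integers. -/
def IsIntegralNP (p : (ℕ → ℚ) × (ℕ → ℚ)) (r : ℕ) : Prop :=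
  ∀ k, 1 ≤ k → k ≤ r →
    (∃ a : ℕ, 0 < a ∧ p.1 k = a) ∧ (∃ b : ℕ, 0 < b ∧ p.2 k = b)

/-- A special datum: all the inclinations are greater than `1`. -/
def IsSpecialNP (p : (ℕ → ℚ) × (ℕ → ℚ)) (r : ℕ) : Prop :=
  ∀ k, 1 ≤ k → k ≤ r → 1 < p.1 k / p.2 k

/-- The height `ht(N) = M_1 + ⋯ + M_r` of a Newton-polygon datum with `r` edges. -/
def htNP (p : (ℕ → ℚ) × (ℕ → ℚ)) (r : ℕ) : ℚ := ∑ k ∈ Finset.Icc 1 r, p.2 k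

/-- The reduction `R(N)`, with `L'_i = L_{i+1} − (L_1/(1+M_1))·M_{i+1}` and
`M'_i = M_{i+1}/(1+M_1)`; its iterates give `R^i(N)` via `redNP^[i] p`. -/
def redNP (p : (ℕ → ℚ) × (ℕ → ℚ)) : (ℕ → ℚ) × (ℕ → ℚ) :=
  (fun i => p.1 (i + 1) - (p.1 1 / (1 + p.2 1)) * p.2 (i + 1),
   fun i => p.2 (i + 1) / (1 + p.2 1))

/-- Condition (R1): `1 + ht(N) < L_1/M_1`. -/
def CondR1 (p : (ℕ → ℚ) × (ℕ → ℚ)) (r : ℕ) : Prop :=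
  1 + htNP p r < p.1 1 / p.2 1

/-- Condition (R2): for `0 ≤ i ≤ r−1`, all entries of `R^i(N)` are integers and
`L^{(i)}_1/M^{(i)}_1` is a (natural) integer. -/
def CondR2 (p : (ℕ → ℚ) × (ℕ → ℚ)) (r : ℕ) : Prop :=
  ∀ i, i ≤ r - 1 →
    (∀ k, 1 ≤ k → k ≤ r - i →
      (∃ a : ℤ, (redNP^[i] p).1 k = a) ∧ (∃ b : ℤ, (redNP^[i] p).2 k = b)) ∧
    ∃ a : ℕ, (redNP^[i] p).1 1 / (redNP^[i] p).2 1 = a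

/-- Condition (R3): for `0 ≤ i ≤ r−1`,
`(1 + M^{(i)}_1)·gcd(L^{(i)}_1/M^{(i)}_1, 1 + ht(R^i(N))) = 1 + ht(R^i(N))`
(the gcd of the two integer-valued rationals being taken via their numerators). -/
def CondR3 (p : (ℕ → ℚ) × (ℕ → ℚ)) (r : ℕ) : Prop :=
  ∀ i, i ≤ r - 1 →
    (1 + (redNP^[i] p).2 1) *
      (Nat.gcd ((redNP^[i] p).1 1 / (redNP^[i] p).2 1).num.natAbs
        (1 + htNP (redNP^[i] p) (r - i)).num.natAbs : ℚ)
    = 1 + htNP (redNP^[i] p) (r - i)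

/-! Each reduction divides the `M`-entries by `1 + M_1` and shears the `L`-entries, so unwinding
`i` reductions gives `M_{i+k} = (∏_{j<i} (1 + M^{(j)}_1)) · M^{(i)}_k` and
`L_{i+k} = L^{(i)}_k + U_i · M^{(i)}_k`, where `U_{i+1} = (1 + M^{(i)}_1) U_i + L^{(i)}_1`
(`shearNP`). The height scales like the `M`-entries, so (R3) says inductively that
`gcd(β_0, …, β_i) = 1 + ht(R^i N)`, whence `n_{i+1} = 1 + M^{(i)}_1`. Zariski's recursion then
becomes the recursion of `U` in the form `β̄_{i+1} = β_{i+1} + U_i`, and the two unwinding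
formulas at `k = 1` are exactly the Merle datum. -/

open Finset

lemma redNP_fst (s : (ℕ → ℚ) × (ℕ → ℚ)) (k : ℕ) :
    (redNP s).1 k = s.1 (k + 1) - s.1 1 / (1 + s.2 1) * s.2 (k + 1) := rfl

lemma redNP_snd (s : (ℕ → ℚ) × (ℕ → ℚ)) (k : ℕ) :
    (redNP s).2 k = s.2 (k + 1) / (1 + s.2 1) := rfl

lemma one_add_htNP_redNP (s : (ℕ → ℚ) × (ℕ → ℚ)) {m : ℕ} (hm : 1 ≤ m)
    (hs : 1 + s.2 1 ≠ 0) :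
    1 + htNP (redNP s) (m - 1) = (1 + htNP s m) / (1 + s.2 1) := by
  have hshift : htNP (redNP s) (m - 1) = (∑ k ∈ Ioc 1 m, s.2 k) / (1 + s.2 1) := by
    rw [htNP, ← Icc_add_one_left_eq_Ioc, ← Nat.sub_add_cancel hm, ← image_add_right_Icc,
      sum_image (by simp), sum_div, Nat.sub_add_cancel hm]
    rfl
  rw [hshift, htNP, ← add_sum_Ioc_eq_sum_Icc hm]
  field_simp
  ring

section Iterates

variable {s : (ℕ → ℚ) × (ℕ → ℚ)} {m : ℕ}

lemma redNP_iterate_snd_pos (hs : ∀ k, 1 ≤ k → k ≤ m → 0 < s.2 k) (i : ℕ) :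
    ∀ k, 1 ≤ k → i + k ≤ m → 0 < (redNP^[i] s).2 k := by
  induction i with
  | zero => simpa using hs
  | succ i ih =>
    intro k hk hik
    rw [Function.iterate_succ_apply', redNP_snd]
    exact div_pos (ih (k + 1) (by omega) (by omega)) (by linarith [ih 1 le_rfl (by omega)])

lemma snd_add_eq_prod_mul_redNP_iterate_snd (hs : ∀ k, 1 ≤ k → k ≤ m → 0 < s.2 k)
    (i : ℕ) : ∀ k, 1 ≤ k → i + k ≤ m →
      s.2 (i + k) = (∏ j ∈ range i, (1 + (redNP^[j] s).2 1)) * (redNP^[i] s).2 k := by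
  induction i with
  | zero => intro k _ _; simp
  | succ i ih =>
    intro k hk hik
    have hc : 1 + (redNP^[i] s).2 1 ≠ 0 := by
      linarith [redNP_iterate_snd_pos hs i 1 le_rfl (by omega)]
    rw [prod_range_succ, Function.iterate_succ_apply', redNP_snd,
      show i + 1 + k = i + (k + 1) by omega, ih (k + 1) (by omega) (by omega)]
    field_simp

def shearNP (s : (ℕ → ℚ) × (ℕ → ℚ)) : ℕ → ℚ
  | 0 => 0
  | i + 1 => (1 + (redNP^[i] s).2 1) * shearNP s i + (redNP^[i] s).1 1

lemma fst_add_eq_redNP_iterate_fst_add_shearNP (hs : ∀ k, 1 ≤ k → k ≤ m → 0 < s.2 k)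
    (i : ℕ) : ∀ k, 1 ≤ k → i + k ≤ m →
      s.1 (i + k) = (redNP^[i] s).1 k + shearNP s i * (redNP^[i] s).2 k := by
  induction i with
  | zero => intro k _ _; simp [shearNP]
  | succ i ih =>
    intro k hk hik
    have hc : 1 + (redNP^[i] s).2 1 ≠ 0 := by
      linarith [redNP_iterate_snd_pos hs i 1 le_rfl (by omega)]
    rw [Function.iterate_succ_apply', redNP_fst, redNP_snd, shearNP,
      show i + 1 + k = i + (k + 1) by omega, ih (k + 1) (by omega) (by omega)]
    field_simp
    ring

end Iterates

section MerleDatum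

variable {p : (ℕ → ℚ) × (ℕ → ℚ)} {r : ℕ} {β : ℕ → ℕ}

lemma cast_gcd_range_eq_one_add_htNP (hM : ∀ k, 1 ≤ k → k ≤ r → 0 < p.2 k)
    (h3 : CondR3 p r) (hβ0 : (β 0 : ℚ) = 1 + htNP p r)
    (hβ : ∀ k, 1 ≤ k → k ≤ r →
      (β k : ℚ) = (redNP^[k - 1] p).1 1 / (redNP^[k - 1] p).2 1) :
    ∀ i ≤ r, (((range (i + 1)).gcd β : ℕ) : ℚ) = 1 + htNP (redNP^[i] p) (r - i) := by
  intro i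
  induction i with
  | zero => intro _; simpa using hβ0
  | succ i ih =>
    intro hi
    have hc : 1 + (redNP^[i] p).2 1 ≠ 0 := by
      linarith [redNP_iterate_snd_pos hM i 1 le_rfl (by omega)]
    have hβi := hβ (i + 1) (by omega) hi
    rw [Nat.add_sub_cancel] at hβi
    have hR3 := h3 i (by omega)
    rw [← hβi, ← ih (by omega)] at hR3
    simp only [Rat.num_natCast, Int.natAbs_natCast] at hR3
    rw [Function.iterate_succ_apply', show r - (i + 1) = r - i - 1 by omega,
      one_add_htNP_redNP _ (by omega) hc, ← ih (by omega), eq_div_iff hc, range_add_one,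
      gcd_insert, ← hR3, mul_comm]
    rfl

lemma cast_gcd_range_div_gcd_range_eq (hM : ∀ k, 1 ≤ k → k ≤ r → 0 < p.2 k)
    (h3 : CondR3 p r) (hβ0 : (β 0 : ℚ) = 1 + htNP p r)
    (hβ : ∀ k, 1 ≤ k → k ≤ r →
      (β k : ℚ) = (redNP^[k - 1] p).1 1 / (redNP^[k - 1] p).2 1)
    {i : ℕ} (hi : i < r) :
    (((range (i + 1)).gcd β / (range (i + 1 + 1)).gcd β : ℕ) : ℚ) = 1 + (redNP^[i] p).2 1 := by
  have hg := cast_gcd_range_eq_one_add_htNP hM h3 hβ0 hβ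
  have hc : 1 + (redNP^[i] p).2 1 ≠ 0 := by
    linarith [redNP_iterate_snd_pos hM i 1 le_rfl (by omega)]
  have hg_pos : (0 : ℚ) < ((range (i + 1)).gcd β : ℕ) := by
    have hht : 0 ≤ htNP (redNP^[i] p) (r - i) := sum_nonneg fun k hk =>
      (redNP_iterate_snd_pos hM i k (mem_Icc.1 hk).1 (by have := (mem_Icc.1 hk).2; omega)).le
    rw [hg i hi.le]
    linarith
  have hg_succ : (((range (i + 1 + 1)).gcd β : ℕ) : ℚ) =
      ((range (i + 1)).gcd β : ℕ) / (1 + (redNP^[i] p).2 1) := by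
    rw [hg (i + 1) hi, hg i hi.le, Function.iterate_succ_apply',
      show r - (i + 1) = r - i - 1 by omega, one_add_htNP_redNP _ (by omega) hc]
  have hdvd : (range (i + 1 + 1)).gcd β ∣ (range (i + 1)).gcd β :=
    gcd_mono (range_subset_range.2 (by omega))
  rw [Nat.cast_div hdvd (by rw [hg_succ]; exact div_ne_zero hg_pos.ne' hc), hg_succ,
    div_div_cancel₀ hg_pos.ne']

lemma redNP_iterate_fst_one_eq (hM : ∀ k, 1 ≤ k → k ≤ r → 0 < p.2 k)
    (hβ : ∀ k, 1 ≤ k → k ≤ r →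
      (β k : ℚ) = (redNP^[k - 1] p).1 1 / (redNP^[k - 1] p).2 1)
    {i : ℕ} (hi : i < r) : (redNP^[i] p).1 1 = β (i + 1) * (redNP^[i] p).2 1 := by
  rw [hβ (i + 1) (by omega) hi, Nat.add_sub_cancel,
    div_mul_cancel₀ _ (redNP_iterate_snd_pos hM i 1 le_rfl (by omega)).ne']

lemma cast_bb_succ_eq_add_shearNP {n bb : ℕ → ℕ}
    (hn : ∀ i < r, (n (i + 1) : ℚ) = 1 + (redNP^[i] p).2 1)
    (hL : ∀ i < r, (redNP^[i] p).1 1 = β (i + 1) * (redNP^[i] p).2 1)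
    (hbb1 : bb 1 = β 1)
    (hbbrec : ∀ k, 1 ≤ k → k ≤ r - 1 →
      (bb (k + 1) : ℤ) = n k * bb k + β (k + 1) - β k) :
    ∀ i < r, (bb (i + 1) : ℚ) = β (i + 1) + shearNP p i := by
  intro i
  induction i with
  | zero => intro _; simp [hbb1, shearNP]
  | succ i ih =>
    intro hi
    have hrec : (bb (i + 1 + 1) : ℚ) = n (i + 1) * bb (i + 1) + β (i + 1 + 1) - β (i + 1) := by
      exact_mod_cast hbbrec (i + 1) (by omega) (by omega)
    rw [shearNP]
    linear_combination hrec + (bb (i + 1) : ℚ) * hn i (by omega)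
      + (1 + (redNP^[i] p).2 1) * ih (by omega) - hL i (by omega)

end MerleDatum

theorem reduction_merle_datum_eq
    (p : (ℕ → ℚ) × (ℕ → ℚ)) (r : ℕ)
    (hc : IsCanonicalNP p r)
    (h3 : CondR3 p r)
    (β : ℕ → ℕ)
    (hβ0 : (β 0 : ℚ) = 1 + htNP p r)
    (hβ : ∀ k, 1 ≤ k → k ≤ r →
      (β k : ℚ) = (redNP^[k - 1] p).1 1 / (redNP^[k - 1] p).2 1)
    (n : ℕ → ℕ)
    (hn : ∀ k, 1 ≤ k → k ≤ r →
      n k = (Finset.range k).gcd β / (Finset.range (k + 1)).gcd β)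
    (bb : ℕ → ℕ)
    (hbb1 : bb 1 = β 1)
    (hbbrec : ∀ k, 1 ≤ k → k ≤ r - 1 →
      (bb (k + 1) : ℤ) = n k * bb k + β (k + 1) - β k) :
    ∀ k, 1 ≤ k → k ≤ r →
      ((n k : ℚ) - 1) * bb k = p.1 k ∧
      ((∏ j ∈ Finset.Icc 1 (k - 1), n j : ℕ) : ℚ) * ((n k : ℚ) - 1) = p.2 k := by
  have hM : ∀ k, 1 ≤ k → k ≤ r → 0 < p.2 k := fun k hk hkr => (hc.1 k hk hkr).2
  have hn' : ∀ i < r, (n (i + 1) : ℚ) = 1 + (redNP^[i] p).2 1 := fun i hi => by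
    rw [hn (i + 1) (by omega) hi, cast_gcd_range_div_gcd_range_eq hM h3 hβ0 hβ hi]
  have hL := fun i (hi : i < r) => redNP_iterate_fst_one_eq hM hβ hi
  intro k hk hkr
  obtain ⟨i, rfl⟩ : ∃ i, k = i + 1 := ⟨k - 1, by omega⟩
  have hni : (n (i + 1) : ℚ) - 1 = (redNP^[i] p).2 1 := by rw [hn' i (by omega)]; ring
  have hprod : ((∏ j ∈ Icc 1 i, n j : ℕ) : ℚ) = ∏ j ∈ range i, (1 + (redNP^[j] p).2 1) := by
    have hshift : ∏ j ∈ Icc 1 i, (n j : ℚ) = ∏ j ∈ range i, (n (j + 1) : ℚ) := by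
      rw [range_eq_Ico, prod_Ico_add' (fun j => (n j : ℚ)), Ico_add_one_right_eq_Icc, zero_add]
    rw [Nat.cast_prod, hshift]
    exact prod_congr rfl fun j hj => hn' j (by have := mem_range.1 hj; omega)
  rw [Nat.add_sub_cancel, hni, hprod]
  constructor
  · rw [cast_bb_succ_eq_add_shearNP hn' hL hbb1 hbbrec i (by omega),
      fst_add_eq_redNP_iterate_fst_add_shearNP hM i 1 le_rfl (by omega), hL i (by omega)]
    ring
  · rw [snd_add_eq_prod_mul_redNP_iterate_snd hM i 1 le_rfl (by omega)]
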